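/- arXiv:1410.6793 — 4 statements merged into one kernel-verified Lean document; each statement's English description precedes it below -/
import Mathlib

section
/- Let G be a finite simple graph, v a vertex of G with degree d(v) ≥ 1, and let u_1, u_2, …, u_{d(v)} be the neighbors of v listed so that their core numbers are nondecreasing: k(u_1) ≤ k(u_2) ≤ … ≤ k(u_{d(v)}). Then the core number of v satisfies k(v) = max over 1 ≤ i ≤ d(v) of min( k(u_i), d(v) − i + 1 ). -/
open SimpleGraph

variable {V : Type*}

/-- The degree of `u` inside the subgraph of `G` induced on the vertex set `S`. -/
noncomputable def degIn (G : SimpleGraph V) (S : Set V) (u : V) : ℕ :=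
  {w ∈ S | G.Adj u w}.ncard

/-- `v` belongs to the `k`-core of `G`: there is a vertex set containing `v` all of whose
vertices have degree at least `k` within the induced subgraph. -/
def inCore (G : SimpleGraph V) (k : ℕ) (v : V) : Prop :=
  ∃ S : Set V, v ∈ S ∧ ∀ u ∈ S, k ≤ degIn G S u

/-- The core number of `v`: the largest `k` such that `v` belongs to the `k`-core of `G`. -/
noncomputable def coreNumber (G : SimpleGraph V) (v : V) : ℕ :=
  sSup {k | inCore G k v}

/-- Degree of a vertex. -/
noncomputable def deg (G : SimpleGraph V) (v : V) : ℕ :=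
  (G.neighborSet v).ncard

/-- The `δ`-neighborhood of `v`: all vertices at shortest-path distance at most `δ` from `v`. -/
def ball (G : SimpleGraph V) (v : V) (δ : ℕ) : Set V :=
  {u | G.Reachable v u ∧ G.dist v u ≤ δ}

/-- The induced estimator `k̆_δ(v)`: the core number of `v` in `G[N_δ(v)]`. -/
noncomputable def kBreve (G : SimpleGraph V) (v : V) (δ : ℕ) : ℕ :=
  coreNumber (G.induce (_root_.ball G v δ)) ⟨v, Reachable.refl v, by rw [SimpleGraph.dist_self]; exact Nat.zero_le _⟩

/-- Neighborhood of `v` as a `Finset`. -/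
noncomputable def nbhd (G : SimpleGraph V) [Finite V] (v : V) : Finset V :=
  (G.neighborSet v).toFinite.toFinset

/-- The propagating estimator `k̂_δ(v)`: `k̂_0(v) = d(v)`, and `k̂_δ(v)` is the max over
`1 ≤ i ≤ d(v)` of `min (k̂_{δ-1}(u_i)) (d(v) - i + 1)`, where `u_1, …, u_{d(v)}` are the
neighbors of `v` listed with `k̂_{δ-1}`-values nondecreasing.  In the formalization the
sorted list `l` of the neighbors' `k̂_{δ-1}`-values is indexed from `0`, so entry `i` of `l`
is `k̂_{δ-1}(u_{i+1})` and `d(v) - i = d(v) - (i+1) + 1`. -/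
noncomputable def kHat (G : SimpleGraph V) [Finite V] : ℕ → V → ℕ
  | 0, v => deg G v
  | δ + 1, v =>
    let l : List ℕ := Multiset.sort ((nbhd G v).val.map (kHat G δ)) (· ≤ ·)
    (Finset.range l.length).sup fun i => min (l.getD i 0) (deg G v - i)

/-!
A vertex lies in the `k`-core exactly when at least `k` of its neighbours do: the `k`-core
together with such a vertex still has minimum degree `k`. Hence `k ≤ k(v)` iff at least `k`
neighbours have core number `≥ k`, and for a nondecreasing list of neighbour core numbers the
largest such `k` is the `h`-index `max_i min (k(u_i), d(v) - i + 1)`.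
-/

open Finset

lemma degIn_mono [Finite V] (G : SimpleGraph V) {S T : Set V} (h : S ⊆ T) (u : V) :
    degIn G S u ≤ degIn G T u :=
  Set.ncard_le_ncard (fun _ hw => ⟨h hw.1, hw.2⟩) (Set.toFinite _)

lemma inCore.mono {G : SimpleGraph V} {j k : ℕ} {v : V} (h : j ≤ k) (hk : inCore G k v) :
    inCore G j v := by
  obtain ⟨S, hv, hS⟩ := hk
  exact ⟨S, hv, fun u hu => h.trans (hS u hu)⟩

lemma bddAbove_setOf_inCore [Finite V] (G : SimpleGraph V) (v : V) :
    BddAbove {k | inCore G k v} := by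
  refine ⟨Nat.card V, fun k ⟨S, hv, hS⟩ => (hS v hv).trans ?_⟩
  exact (Set.ncard_le_ncard (Set.subset_univ _)).trans_eq (Set.ncard_univ V)

lemma le_coreNumber_iff [Finite V] {G : SimpleGraph V} {k : ℕ} {v : V} :
    k ≤ coreNumber G v ↔ inCore G k v := by
  refine ⟨fun hk => inCore.mono hk ?_, le_csSup (bddAbove_setOf_inCore G v)⟩
  have hzero : inCore G 0 v := ⟨{v}, rfl, fun _ _ => Nat.zero_le _⟩
  exact Nat.sSup_mem ⟨0, hzero⟩ (bddAbove_setOf_inCore G v)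

lemma le_degIn_setOf_inCore [Finite V] {G : SimpleGraph V} {k : ℕ} {w : V}
    (hw : inCore G k w) : k ≤ degIn G {x | inCore G k x} w := by
  obtain ⟨S, hwS, hS⟩ := hw
  exact (hS w hwS).trans (degIn_mono G (fun x hx => (⟨S, hx, hS⟩ : inCore G k x)) w)

lemma inCore_iff_le_ncard_adj_inCore [Finite V] {G : SimpleGraph V} {k : ℕ} {v : V} :
    inCore G k v ↔ k ≤ {w | G.Adj v w ∧ inCore G k w}.ncard := by
  constructor
  · rintro ⟨S, hvS, hS⟩
    refine (hS v hvS).trans (Set.ncard_le_ncard ?_ (Set.toFinite _))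
    exact fun w ⟨hwS, hvw⟩ => ⟨hvw, S, hwS, hS⟩
  · intro hk
    refine ⟨insert v {x | inCore G k x}, Set.mem_insert v _, fun w hw => ?_⟩
    obtain rfl | hw := hw
    · refine hk.trans (Set.ncard_le_ncard ?_ (Set.toFinite _))
      exact fun x ⟨hvx, hx⟩ => ⟨Set.mem_insert_of_mem _ hx, hvx⟩
    · exact (le_degIn_setOf_inCore hw).trans (degIn_mono G (Set.subset_insert _ _) w)

/-- The `h`-index of a nondecreasing sequence. -/
lemma Monotone.le_sup_min_sub_iff {n : ℕ} {f : Fin n → ℕ} (hf : Monotone f) {k : ℕ} :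
    k ≤ univ.sup (fun i => min (f i) (n - i)) ↔ k ≤ #{i | k ≤ f i} := by
  rcases Nat.eq_zero_or_pos k with rfl | hk0
  · simp only [Nat.zero_le]
  constructor
  · intro hk
    obtain ⟨i, -, hki⟩ := (Finset.le_sup_iff hk0).1 hk
    have hup : Ici i ⊆ ({j | k ≤ f j} : Finset (Fin n)) := fun j hj =>
      mem_filter.2 ⟨mem_univ j, (le_min_iff.1 hki).1.trans (hf (mem_Ici.1 hj))⟩
    calc k ≤ n - i := (le_min_iff.1 hki).2
      _ = #(Ici i) := (Fin.card_Ici i).symm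
      _ ≤ #{j | k ≤ f j} := card_le_card hup
  · intro hk
    have hkn : k ≤ n := hk.trans ((card_filter_le _ _).trans_eq (card_fin n))
    let j : Fin n := ⟨n - k, by omega⟩
    have hjval : (j : ℕ) = n - k := rfl
    have hkj : k ≤ f j := by
      by_contra! hlt
      have hsub : ({i | k ≤ f i} : Finset (Fin n)) ⊆ Ioi j := fun i hi =>
        mem_Ioi.2 (lt_of_not_ge fun hij => (hlt.trans_le' (hf hij)).not_ge (mem_filter.1 hi).2)
      have := (card_le_card hsub).trans_eq (Fin.card_Ioi j)
      omega
    refine le_trans ?_ (le_sup (f := fun i : Fin n => min (f i) (n - i)) (mem_univ j))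
    exact le_min hkj (by omega)

/-- Indices are `0`-based: term `i` is `min (k(u_{i+1})) (d(v) - (i+1) + 1)`. -/
theorem stmt6_general {V : Type*} [Fintype V] (G : SimpleGraph V) (v : V)
    (u : Fin (deg G v) → V)
    (hinj : Function.Injective u)
    (hadj : ∀ i, G.Adj v (u i))
    (hsurj : ∀ w, G.Adj v w → ∃ i, u i = w)
    (hmono : Monotone fun i => coreNumber G (u i)) :
    coreNumber G v =
      Finset.univ.sup fun i : Fin (deg G v) => min (coreNumber G (u i)) (deg G v - (i : ℕ)) := by
  refine eq_of_forall_le_iff fun k => ?_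
  have hnbrs : {w | G.Adj v w ∧ inCore G k w} = u '' {i | k ≤ coreNumber G (u i)} := by
    ext w
    constructor
    · rintro ⟨hvw, hw⟩
      obtain ⟨i, rfl⟩ := hsurj w hvw
      exact ⟨i, le_coreNumber_iff.2 hw, rfl⟩
    · rintro ⟨i, hi, rfl⟩
      exact ⟨hadj i, le_coreNumber_iff.1 hi⟩
  rw [hmono.le_sup_min_sub_iff, le_coreNumber_iff, inCore_iff_le_ncard_adj_inCore, hnbrs,
    Set.ncard_image_of_injective _ hinj, Set.ncard_eq_toFinset_card', Set.toFinset_ofPred]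

/-- if `u` enumerates the neighbors of `v` (degree `d(v) ≥ 1`) with
nondecreasing core numbers, then `k(v) = max_{1 ≤ i ≤ d(v)} min (k(u_i)) (d(v) - i + 1)`.
Indices here run over `i : Fin (d(v))`, i.e. `0`-indexed, so term `i` is
`min (k(u i)) (d(v) - i) = min (k(u_{i+1})) (d(v) - (i+1) + 1)`. -/
theorem stmt6 {V : Type*} [Fintype V] (G : SimpleGraph V) (v : V) (hd : 1 ≤ deg G v)
    (u : Fin (deg G v) → V)
    (hinj : Function.Injective u)
    (hadj : ∀ i, G.Adj v (u i))
    (hsurj : ∀ w, G.Adj v w → ∃ i, u i = w)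
    (hmono : Monotone fun i => coreNumber G (u i)) :
    coreNumber G v =
      Finset.univ.sup fun i : Fin (deg G v) => min (coreNumber G (u i)) (deg G v - (i : ℕ)) :=
  stmt6_general G v u hinj hadj hsurj hmono
end

section
/- Let G be a finite simple graph with all vertex degrees positive. For every vertex v and every integer δ ≥ 0, the propagating estimator is an upper bound on the core number: k(v) ≤ k̂_δ(v). -/
open SimpleGraph

variable {V : Type*}

/-
Every vertex `v` of a `k`-core `S` satisfies `k ≤ k̂_δ(v)`, by induction on `δ`: for `δ = 0` this is
`k ≤ d_S(v) ≤ d(v)`, and in the inductive step at least `k` neighbours of `v` lie in `S` and so have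
`k̂_{δ-1} ≥ k`. In the sorted list of the `d(v)` neighbour values the entry at position `d(v) - k + 1`
is then at least `k`, so the term `i = d(v) - k + 1` of the maximum defining `k̂_δ(v)` is `≥ k`.
-/

lemma inCore_zero (G : SimpleGraph V) (v : V) : inCore G 0 v :=
  ⟨Set.univ, Set.mem_univ v, fun _ _ => Nat.zero_le _⟩

lemma degIn_le_deg [Finite V] (G : SimpleGraph V) (S : Set V) (u : V) :
    degIn G S u ≤ deg G u :=
  Set.ncard_le_ncard (fun _ hw => hw.2) (Set.toFinite _)

lemma inCore.le_deg [Finite V] {G : SimpleGraph V} {k : ℕ} {v : V} (h : inCore G k v) :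
    k ≤ deg G v := by
  obtain ⟨S, hvS, hS⟩ := h
  exact (hS v hvS).trans (degIn_le_deg G S v)

lemma inCore_coreNumber [Finite V] (G : SimpleGraph V) (v : V) :
    inCore G (coreNumber G v) v :=
  Nat.sSup_mem ⟨0, inCore_zero G v⟩ ⟨deg G v, fun _ => inCore.le_deg⟩

namespace List

lemma le_getElem_of_le_countP {l : List ℕ} (hs : l.Pairwise (· ≤ ·)) {k i : ℕ}
    (hc : k ≤ l.countP (k ≤ ·)) (hi : l.length - k ≤ i) (hlt : i < l.length) :
    k ≤ l[i] := by
  by_contra! hlk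
  have hprefix : (l.take (i + 1)).countP (k ≤ ·) = 0 := by
    refine countP_eq_zero.2 fun a ha => ?_
    obtain ⟨j, hj, rfl⟩ := mem_take_iff_getElem.1 ha
    have := hs.rel_get_of_le (a := ⟨j, by omega⟩) (b := ⟨i, hlt⟩) (Fin.mk_le_mk.2 (by omega))
    simp only [get_eq_getElem, decide_eq_true_eq] at this ⊢
    omega
  have hsuffix := countP_le_length (p := (k ≤ ·)) (l := l.drop (i + 1))
  rw [← take_append_drop (i + 1) l, countP_append, hprefix] at hc
  rw [length_drop] at hsuffix
  omega

lemma le_sup_min_getD_of_le_countP {l : List ℕ} (hs : l.Pairwise (· ≤ ·)) {k : ℕ}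
    (hc : k ≤ l.countP (k ≤ ·)) :
    k ≤ (Finset.range l.length).sup fun i => min (l.getD i 0) (l.length - i) := by
  rcases k.eq_zero_or_pos with rfl | hk
  · exact Nat.zero_le _
  have hkl : k ≤ l.length := hc.trans countP_le_length
  have hi : l.length - k < l.length := by omega
  refine le_trans ?_ (Finset.le_sup (f := fun i => min (l.getD i 0) (l.length - i))
    (Finset.mem_range.2 hi))
  rw [getD_eq_getElem l 0 hi]
  exact le_min (le_getElem_of_le_countP hs hc le_rfl hi) (by omega)

end List

lemma le_kHat_succ [Finite V] {G : SimpleGraph V} {δ k : ℕ} {v : V}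
    (h : k ≤ ((nbhd G v).filter fun w => k ≤ kHat G δ w).card) :
    k ≤ kHat G (δ + 1) v := by
  set l := Multiset.sort ((nbhd G v).val.map (kHat G δ)) (· ≤ ·)
  have hlen : l.length = deg G v := by
    rw [Multiset.length_sort, Multiset.card_map, deg, Set.ncard_eq_toFinset_card _ (Set.toFinite _)]
    rfl
  have hcount : k ≤ l.countP (k ≤ ·) := by
    rwa [← Multiset.coe_countP, Multiset.sort_eq, Multiset.countP_map]
  show k ≤ (Finset.range l.length).sup fun i => min (l.getD i 0) (deg G v - i)
  rw [← hlen]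
  exact List.le_sup_min_getD_of_le_countP (Multiset.pairwise_sort _ _) hcount

lemma inCore.le_kHat [Finite V] {G : SimpleGraph V} {k : ℕ} {v : V} (h : inCore G k v)
    (δ : ℕ) : k ≤ kHat G δ v := by
  induction δ generalizing v with
  | zero => exact h.le_deg
  | succ δ ih =>
    obtain ⟨S, hvS, hS⟩ := h
    refine le_kHat_succ ((hS v hvS).trans ?_)
    rw [degIn, ← Set.ncard_coe_finset]
    refine Set.ncard_le_ncard (fun w ⟨hwS, hvw⟩ => ?_) (Set.toFinite _)
    simp only [Finset.coe_filter, nbhd, Set.Finite.mem_toFinset]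
    exact ⟨hvw, ih ⟨S, hwS, hS⟩⟩

theorem stmt9_general {V : Type*} [Fintype V] (G : SimpleGraph V)
    (v : V) (δ : ℕ) :
    coreNumber G v ≤ kHat G δ v :=
  (inCore_coreNumber G v).le_kHat δ

/-- in a finite graph with all degrees positive, the propagating estimator is
an upper bound on the core number: `k(v) ≤ k̂_δ(v)`. -/
theorem stmt9 {V : Type*} [Fintype V] (G : SimpleGraph V) (hdeg : ∀ w, 0 < deg G w)
    (v : V) (δ : ℕ) :
    coreNumber G v ≤ kHat G δ v :=
  stmt9_general G v δ
end

section
/- Let G be a finite simple graph with all vertex degrees positive. For every vertex v and every integer δ ≥ 0, the propagating estimator is nonincreasing in δ: k̂_{δ+1}(v) ≤ k̂_δ(v). -/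
open SimpleGraph

variable {V : Type*}

/-!
Induction on `δ`. For `δ = 0` every term `min (·) (d(v) - i)` is at most `d(v)`. For the step,
one update of the estimator is monotone in the multiset of neighbour values: if each value
decreases, so does each order statistic, because `l[i] < x` holds for a sorted list exactly when
more than `i` of its entries lie below `x`, and that count can only grow.
-/

namespace List

variable {α : Type*} [LinearOrder α]

theorem Pairwise.getElem_lt_iff_lt_countP {l : List α} (hl : l.Pairwise (· ≤ ·)) {i : ℕ}
    (hi : i < l.length) (x : α) : l[i] < x ↔ i < l.countP (· < x) := by
  have hsplit : l = l.take i ++ l[i] :: l.drop (i + 1) := by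
    rw [← drop_eq_getElem_cons, take_append_drop]
  have hpair := hsplit ▸ hl
  simp only [pairwise_append, pairwise_cons, mem_cons] at hpair
  obtain ⟨-, ⟨hge, -⟩, hle⟩ := hpair
  have hcount : l.countP (· < x) =
      (l.take i).countP (· < x) + ((l[i] :: l.drop (i + 1)).countP (· < x)) := by
    rw [← countP_append, ← hsplit]
  have htake : (l.take i).length = i := length_take_of_le hi.le
  constructor
  · intro hlt
    have : (l.take i).countP (· < x) = i := by
      rw [countP_eq_length.2 fun a ha => by simpa using (hle a ha l[i] (.inl rfl)).trans_lt hlt,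
        htake]
    rw [hcount, this, countP_cons_of_pos (by simpa using hlt)]
    omega
  · intro hcnt
    by_contra! hxle
    have : (l[i] :: l.drop (i + 1)).countP (· < x) = 0 := by
      rw [countP_eq_zero]
      rintro a (_ | ⟨_, ha⟩)
      · simpa using hxle
      · simpa using hxle.trans (hge a ha)
    have := (l.take i).countP_le_length (p := (· < x))
    omega

end List

namespace Multiset

variable {α : Type*} [LinearOrder α]

theorem countP_lt_le_of_rel_le {A B : Multiset α} (h : Rel (· ≤ ·) A B) (x : α) :
    B.countP (· < x) ≤ A.countP (· < x) := by
  induction h with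
  | zero => simp
  | cons hab _ ih =>
    rw [countP_cons, countP_cons]
    gcongr
    split_ifs with hb ha
    exacts [le_rfl, absurd (hab.trans_lt hb) ha, Nat.zero_le _, le_rfl]

theorem getElem_sort_le_of_rel_le {A B : Multiset α} (h : Rel (· ≤ ·) A B) {i : ℕ}
    (hA : i < (A.sort (· ≤ ·)).length) (hB : i < (B.sort (· ≤ ·)).length) :
    (A.sort (· ≤ ·))[i] ≤ (B.sort (· ≤ ·))[i] := by
  by_contra! hlt
  have hB' := ((pairwise_sort B _).getElem_lt_iff_lt_countP hB _).1 hlt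
  have hA' := ((pairwise_sort A _).getElem_lt_iff_lt_countP hA _).not.1 (lt_irrefl _)
  rw [← coe_countP, sort_eq] at hA' hB'
  have := countP_lt_le_of_rel_le h (A.sort (· ≤ ·))[i]
  omega

end Multiset

def kHatStep (d : ℕ) (s : Multiset ℕ) : ℕ :=
  let l : List ℕ := s.sort (· ≤ ·)
  (Finset.range l.length).sup fun i => min (l.getD i 0) (d - i)

theorem kHat_succ (G : SimpleGraph V) [Finite V] (δ : ℕ) (v : V) :
    kHat G (δ + 1) v = kHatStep (deg G v) ((nbhd G v).val.map (kHat G δ)) :=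
  rfl

theorem kHatStep_le (d : ℕ) (s : Multiset ℕ) : kHatStep d s ≤ d :=
  Finset.sup_le fun _ _ => (min_le_right _ _).trans (Nat.sub_le _ _)

theorem kHatStep_mono (d : ℕ) {A B : Multiset ℕ} (h : Multiset.Rel (· ≤ ·) A B) :
    kHatStep d A ≤ kHatStep d B := by
  have hlen : (A.sort (· ≤ ·)).length = (B.sort (· ≤ ·)).length := by
    simp only [Multiset.length_sort, Multiset.card_eq_card_of_rel h]
  simp only [kHatStep, hlen]
  refine Finset.sup_mono_fun fun i hi => ?_
  have hiB : i < (B.sort (· ≤ ·)).length := Finset.mem_range.1 hi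
  rw [List.getD_eq_getElem _ _ (hlen ▸ hiB), List.getD_eq_getElem _ _ hiB]
  exact min_le_min_right _ (Multiset.getElem_sort_le_of_rel_le h _ _)

theorem stmt10_general {V : Type*} [Fintype V] (G : SimpleGraph V)
    (v : V) (δ : ℕ) :
    kHat G (δ + 1) v ≤ kHat G δ v := by
  induction δ generalizing v with
  | zero => exact kHatStep_le _ _
  | succ δ ih =>
    rw [kHat_succ, kHat_succ]
    exact kHatStep_mono _ (Multiset.rel_map.2 (Multiset.rel_refl_of_refl_on fun u _ => ih u))

/-- in a finite graph with all degrees positive, the propagating estimator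
is nonincreasing in `δ`: `k̂_{δ+1}(v) ≤ k̂_δ(v)`. -/
theorem stmt10 {V : Type*} [Fintype V] (G : SimpleGraph V) (hdeg : ∀ w, 0 < deg G w)
    (v : V) (δ : ℕ) :
    kHat G (δ + 1) v ≤ kHat G δ v :=
  stmt10_general G v δ
end

section
/- For every integer δ ≥ 0 and every integer x ≥ 1, there exists a finite simple graph G and a vertex v of G such that k̂_δ(v) − k(v) = x − 1. -/
open SimpleGraph

variable {V : Type*}

/-
Root the witness graph at `v` and make it a tree in which every vertex of depth at most `δ` has
`x` children. Every vertex of the `δ`-ball around the root then has degree at least `x`, so by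
induction on `δ` the propagating estimator is at least `x` there; at the root, whose degree is
exactly `x`, it equals `x`. On the other hand a tree is `1`-degenerate (a deepest vertex of any
vertex set has at most its parent as a neighbour in it), so every core number is `1`.
-/

section Estimator

variable {G : SimpleGraph V}

lemma ball_subset_ball_succ_of_adj {u w : V} (h : G.Adj u w) (d : ℕ) :
    _root_.ball G w d ⊆ _root_.ball G u (d + 1) := fun w' ⟨hreach, hdist⟩ =>
  ⟨h.reachable.trans hreach, by
    have := h.reachable.dist_triangle_left w'
    rw [dist_eq_one_iff_adj.2 h] at this
    omega⟩

variable (G) [Finite V]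

lemma length_sort_kHat_nbhd (d : ℕ) (v : V) :
    (Multiset.sort ((nbhd G v).val.map (kHat G d)) (· ≤ ·)).length = deg G v := by
  rw [Multiset.length_sort, Multiset.card_map, deg,
    Set.ncard_eq_toFinset_card _ (Set.toFinite _)]
  rfl

lemma kHat_le_deg (d : ℕ) (v : V) : kHat G d v ≤ deg G v := by
  cases d with
  | zero => exact le_rfl
  | succ d => exact Finset.sup_le fun i _ => (min_le_right _ _).trans (Nat.sub_le _ _)

variable {G}

lemma le_kHat_succ_s13 {d k : ℕ} {v : V} (hdeg : k ≤ deg G v)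
    (hadj : ∀ w, G.Adj v w → k ≤ kHat G d w) : k ≤ kHat G (d + 1) v := by
  rcases Nat.eq_zero_or_pos k with rfl | hk
  · exact Nat.zero_le _
  simp only [kHat]
  set l := Multiset.sort ((nbhd G v).val.map (kHat G d)) (· ≤ ·)
  have hlen : 0 < l.length := (length_sort_kHat_nbhd G d v).symm ▸ hk.trans_le hdeg
  have hhead : k ≤ l.getD 0 0 := by
    rw [List.getD_eq_getElem _ _ hlen]
    obtain ⟨w, hw, hval⟩ := Multiset.mem_map.1 ((Multiset.mem_sort _).1 (List.getElem_mem hlen))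
    rw [← hval]
    exact hadj w ((Set.Finite.mem_toFinset _).1 hw)
  refine le_trans ?_ (Finset.le_sup (Finset.mem_range.2 hlen))
  exact le_min hhead (by simpa using hdeg)

lemma le_kHat_of_forall_mem_ball {k : ℕ} :
    ∀ (d : ℕ) (u : V), (∀ w ∈ _root_.ball G u d, k ≤ deg G w) → k ≤ kHat G d u
  | 0, u, h => h u ⟨Reachable.refl u, by simp⟩
  | d + 1, u, h => le_kHat_succ_s13 (h u ⟨Reachable.refl u, by simp⟩) fun w hw =>
      le_kHat_of_forall_mem_ball d w fun w' hw' => h w' (ball_subset_ball_succ_of_adj hw d hw')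

end Estimator

section CoreNumber

variable {G : SimpleGraph V}

def IsDegenerate (G : SimpleGraph V) (k : ℕ) : Prop :=
  ∀ S : Set V, S.Nonempty → ∃ u ∈ S, degIn G S u ≤ k

lemma IsDegenerate.le_of_inCore {k j : ℕ} (hG : IsDegenerate G k) {v : V} (h : inCore G j v) :
    j ≤ k := by
  obtain ⟨S, hv, hS⟩ := h
  obtain ⟨u, hu, hle⟩ := hG S ⟨v, hv⟩
  exact (hS u hu).trans hle

lemma inCore_one_of_forall_deg_pos (hdeg : ∀ u, 0 < deg G u) (v : V) : inCore G 1 v :=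
  ⟨Set.univ, Set.mem_univ v, fun u _ => by
    simpa [degIn, deg, neighborSet, Nat.succ_le_iff] using hdeg u⟩

lemma coreNumber_eq_one (hdeg : ∀ u, 0 < deg G u) (hG : IsDegenerate G 1) (v : V) :
    coreNumber G v = 1 :=
  le_antisymm (csSup_le' fun _ => hG.le_of_inCore)
    (le_csSup ⟨1, fun _ => hG.le_of_inCore⟩ (inCore_one_of_forall_deg_pos hdeg v))

end CoreNumber

section HeapTree

/-- Heap numbering: vertex `j > 0` has parent `(j - 1) / x`, so the children of `u` are
`x * u + 1, …, x * u + x` (those below `n`). -/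
def heapTree (x n : ℕ) : SimpleGraph (Fin n) where
  Adj i j := (0 < j.val ∧ i.val = (j.val - 1) / x) ∨ (0 < i.val ∧ j.val = (i.val - 1) / x)
  symm := ⟨fun _ _ h => h.symm⟩
  loopless := ⟨fun i h => by
    have := Nat.div_le_self (i.val - 1) x
    rcases h with ⟨hi, he⟩ | ⟨hi, he⟩ <;> omega⟩

def heapDepth (x : ℕ) : ℕ → ℕ
  | 0 => 0
  | i + 1 => heapDepth x (i / x) + 1
decreasing_by exact Nat.lt_succ_of_le (Nat.div_le_self i x)

variable {x n : ℕ}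

lemma heapDepth_eq_parent_add_one {j : ℕ} (hj : 0 < j) :
    heapDepth x j = heapDepth x ((j - 1) / x) + 1 := by
  obtain ⟨i, rfl⟩ := Nat.exists_eq_add_of_lt hj
  rw [heapDepth]
  rfl

lemma lt_pow_of_heapDepth_le (hx : 0 < x) {u d : ℕ} (h : heapDepth x u ≤ d) :
    u < (x + 1) ^ d := by
  induction u using Nat.strong_induction_on generalizing d with
  | _ u ih =>
    rcases u with _ | i
    · exact pow_pos (Nat.succ_pos x) d
    rw [heapDepth] at h
    obtain ⟨e, rfl⟩ := Nat.exists_eq_add_of_le' (Nat.le_of_add_left_le h)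
    have hparent : i / x < (x + 1) ^ e :=
      ih _ (Nat.lt_succ_of_le (Nat.div_le_self i x)) (by omega)
    have hi : i < x * (i / x + 1) := by
      rw [Nat.mul_add_one]; have := Nat.div_add_mod i x; have := Nat.mod_lt i hx; omega
    calc i + 1 ≤ x * (x + 1) ^ e := hi.trans_le (Nat.mul_le_mul_left x hparent)
      _ < (x + 1) ^ (e + 1) := by rw [pow_succ]; nlinarith [pow_pos (Nat.succ_pos x) e]

lemma heapDepth_le_of_adj {u w : Fin n} (h : (heapTree x n).Adj u w) :
    heapDepth x w ≤ heapDepth x u + 1 := by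
  rcases h with ⟨hw, he⟩ | ⟨hu, he⟩
  · rw [heapDepth_eq_parent_add_one hw, ← he]
  · rw [heapDepth_eq_parent_add_one hu, ← he]; omega

lemma heapDepth_le_add_length {u w : Fin n} (p : (heapTree x n).Walk u w) :
    heapDepth x w ≤ heapDepth x u + p.length := by
  induction p with
  | nil => simp
  | cons h p ih => have := heapDepth_le_of_adj h; rw [Walk.length_cons]; omega

lemma heapDepth_le_of_mem_ball {δ : ℕ} (h0 : 0 < n) {w : Fin n}
    (hw : w ∈ _root_.ball (heapTree x n) ⟨0, h0⟩ δ) : heapDepth x w ≤ δ := by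
  obtain ⟨p, hp⟩ := hw.1.exists_walk_length_eq_dist
  have := heapDepth_le_add_length p
  simp only [heapDepth] at this
  exact (this.trans_eq (by simpa using hp)).trans hw.2

lemma le_deg_heapTree {u : Fin n} (hu : x * u.val + x < n) : x ≤ deg (heapTree x n) u := by
  have hchildren :
      Set.Icc (x * u.val + 1) (x * u.val + x) ⊆ Fin.val '' (heapTree x n).neighborSet u := by
    intro j ⟨hj1, hj2⟩
    refine ⟨⟨j, by omega⟩, Or.inl ⟨by dsimp only; omega, ?_⟩, rfl⟩
    dsimp only
    exact (Nat.div_eq_of_lt_le (by rw [Nat.mul_comm]; omega)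
      (by rw [Nat.add_mul, Nat.one_mul, Nat.mul_comm]; omega)).symm
  have := Set.ncard_le_ncard hchildren (Set.toFinite _)
  rwa [Set.ncard_Icc_nat, Set.ncard_image_of_injective _ Fin.val_injective,
    show x * u.val + x + 1 - (x * u.val + 1) = x by omega] at this

lemma le_deg_heapTree_of_heapDepth_le (hx : 0 < x) {d : ℕ} {u : Fin ((x + 1) ^ (d + 1))}
    (hu : heapDepth x u ≤ d) : x ≤ deg (heapTree x ((x + 1) ^ (d + 1))) u := by
  apply le_deg_heapTree
  calc x * u.val + x = x * (u.val + 1) := by ring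
    _ ≤ x * (x + 1) ^ d := Nat.mul_le_mul_left x (lt_pow_of_heapDepth_le hx hu)
    _ < (x + 1) ^ (d + 1) := by rw [pow_succ]; nlinarith [pow_pos (Nat.succ_pos x) d]

lemma deg_heapTree_zero_le (hx : 0 < x) (h0 : 0 < n) : deg (heapTree x n) ⟨0, h0⟩ ≤ x := by
  have hsub : Fin.val '' (heapTree x n).neighborSet ⟨0, h0⟩ ⊆ Set.Icc 1 x := by
    rintro _ ⟨w, (⟨hw, he⟩ | ⟨hw, _⟩), rfl⟩
    · have := (Nat.div_eq_zero_iff.1 he.symm).resolve_left hx.ne'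
      exact ⟨hw, by omega⟩
    · exact absurd hw (lt_irrefl 0)
  have := Set.ncard_le_ncard hsub (Set.toFinite _)
  rwa [Set.ncard_Icc_nat, Set.ncard_image_of_injective _ Fin.val_injective,
    Nat.add_sub_cancel] at this

lemma deg_heapTree_pos (hn : 1 < n) (u : Fin n) : 0 < deg (heapTree x n) u := by
  rw [deg, Set.ncard_pos (Set.toFinite _)]
  rcases Nat.eq_zero_or_pos u.val with hu | hu
  · refine ⟨⟨1, hn⟩, Or.inl ⟨Nat.one_pos, ?_⟩⟩
    simp [hu]
  · have hparent : (u.val - 1) / x < n := (Nat.div_le_self _ _).trans_lt (by omega)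
    exact ⟨⟨_, hparent⟩, Or.inr ⟨hu, rfl⟩⟩

lemma isDegenerate_heapTree : IsDegenerate (heapTree x n) 1 := by
  intro S hS
  obtain ⟨u, huS, hmax⟩ := S.toFinite.exists_maximalFor (fun w : Fin n => heapDepth x w) S hS
  refine ⟨u, huS, ?_⟩
  have hparent : {w ∈ S | (heapTree x n).Adj u w} ⊆
      {⟨(u.val - 1) / x, (Nat.div_le_self _ _).trans_lt (by omega)⟩} := by
    rintro w ⟨hwS, (⟨hw, he⟩ | ⟨_, he⟩)⟩
    · have hdepth : heapDepth x w = heapDepth x u + 1 := by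
        rw [heapDepth_eq_parent_add_one hw, ← he]
      have := hmax hwS (show heapDepth x u ≤ heapDepth x w by omega)
      dsimp only at this
      omega
    · exact Fin.ext he
  exact (Set.ncard_le_ncard hparent).trans_eq (Set.ncard_singleton _)

end HeapTree

/-- for every `δ ≥ 0` and every `x ≥ 1` there is a finite simple graph
(with all degrees positive) and a vertex `v` with `k̂_δ(v) - k(v) = x - 1`. -/
theorem stmt13 (δ x : ℕ) (hx : 1 ≤ x) :
    ∃ (n : ℕ) (G : SimpleGraph (Fin n)) (v : Fin n),
      (∀ u, 0 < deg G u) ∧ kHat G δ v - coreNumber G v = x - 1 := by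
  have hn : 1 < (x + 1) ^ (δ + 1) :=
    Nat.one_lt_pow (Nat.succ_ne_zero δ) (Nat.succ_lt_succ hx)
  have h0 : 0 < (x + 1) ^ (δ + 1) := by omega
  have hdeg := deg_heapTree_pos (x := x) hn
  refine ⟨_, heapTree x ((x + 1) ^ (δ + 1)), ⟨0, h0⟩, hdeg, ?_⟩
  have hkHat : kHat (heapTree x _) δ ⟨0, h0⟩ = x :=
    le_antisymm ((kHat_le_deg _ δ _).trans (deg_heapTree_zero_le hx h0))
      (le_kHat_of_forall_mem_ball δ _ fun w hw =>
        le_deg_heapTree_of_heapDepth_le hx (heapDepth_le_of_mem_ball h0 hw))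
  rw [hkHat, coreNumber_eq_one hdeg isDegenerate_heapTree]
end
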